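/- Let m ≥ 2 and let Δ be the simplicial complex on vertex set {u₁,…,u_m, v₁,…,v_{2m}} whose facets are F_i = {u_i} ∪ ({v₁,…,v_{2m}} \ {v_{2i-1}, v_{2i}}) for i = 1,…,m. Then the reduced (m−2)-nd simplicial homology of Δ with coefficients in a field K is nonzero. -/

import Mathlib

open Finset
open scoped Classical

/-- The simplicial boundary map (over a field `K`) from `k`-dimensional reduced chains
(supported on faces of cardinality `k + 1`) to `(k-1)`-dimensional reduced chains
(faces of cardinality `k`) of a simplicial complex `Δ` on a linearly ordered finite
vertex set.  The empty set is allowed as a face, so this computes *reduced* homology. -/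
noncomputable def bdry {V : Type*} [Fintype V] [LinearOrder V] {K : Type*} [Field K]
    (Δ : Set (Finset V)) (k : ℕ)
    (c : {F : Finset V // F ∈ Δ ∧ F.card = k + 1} → K) :
    {F : Finset V // F ∈ Δ ∧ F.card = k} → K :=
  fun G => ∑ v : V,
    if h : v ∉ G.1 ∧ insert v G.1 ∈ Δ then
      (-1 : K) ^ (((insert v G.1).sort (· ≤ ·)).idxOf v) *
        c ⟨insert v G.1, ⟨h.2, by rw [Finset.card_insert_of_notMem h.1, G.2.2]⟩⟩
    else 0

/-- The facet `F_i = {u_i} ∪ ({v₁,…,v_{2m}} \ {v_{2i-1}, v_{2i}})`, with vertex set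
`Fin (3m)`, where `u_i ↦ i` (for `i < m`) and `v_j ↦ m + j` (for `j < 2m`). -/
def facetF (m : ℕ) (i : Fin m) : Finset (Fin (3 * m)) :=
  insert ⟨i.val, by omega⟩
    ((Finset.univ.filter (fun k : Fin (3 * m) => m ≤ k.val)) \
      {⟨m + 2 * i.val, by omega⟩, ⟨m + 2 * i.val + 1, by omega⟩})

/-- The simplicial complex `Δ` generated by the facets `F₁, …, F_m`. -/
def Δm (m : ℕ) : Set (Finset (Fin (3 * m))) := {F | ∃ i : Fin m, F ⊆ facetF m i}

lemma mem_facetF {m : ℕ} {i : Fin m} {x : Fin (3 * m)} :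
    x ∈ facetF m i ↔ x.val = i.val ∨
      (m ≤ x.val ∧ x.val ≠ m + 2 * i.val ∧ x.val ≠ m + 2 * i.val + 1) := by
  simp [facetF, Fin.ext_iff]

lemma Δm_down {m : ℕ} {A B : Finset (Fin (3 * m))} (h : A ⊆ B) (hB : B ∈ Δm m) :
    A ∈ Δm m := by
  obtain ⟨i, hi⟩ := hB; exact ⟨i, h.trans hi⟩

def fm (m : ℕ) (x : Fin (3 * m)) : ℕ :=
  if x.val < m then (x.val + 1) % m else (x.val - m) / 2

def Sm (m : ℕ) : Finset (Fin (3 * m)) :=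
  univ.filter (fun x => m ≤ x.val ∧ (x.val - m) % 2 = 0)

def Gmm (m j : ℕ) : Finset (Fin (3 * m)) := (Sm m).filter (fun x => x.val ≠ m + 2 * j)

noncomputable def zf (m : ℕ) (K : Type*) [Field K] (G : Finset (Fin (3 * m))) : K :=
  ∑ j ∈ Finset.range m, if G = Gmm m j then (-1 : K) ^ j else 0

noncomputable def phif (m : ℕ) (K : Type*) [Field K] (G : Finset (Fin (3 * m))) : K :=
  if G.image (fm m) = Finset.Ioo 0 m then 1 else 0

lemma mem_Sm {m : ℕ} {x : Fin (3 * m)} :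
    x ∈ Sm m ↔ m ≤ x.val ∧ (x.val - m) % 2 = 0 := by simp [Sm]

lemma mem_Gmm {m j : ℕ} {x : Fin (3 * m)} :
    x ∈ Gmm m j ↔ (m ≤ x.val ∧ (x.val - m) % 2 = 0) ∧ x.val ≠ m + 2 * j := by
  simp [Gmm, mem_Sm]

lemma card_Sm_filter {m : ℕ} : ∀ c : ℕ, c ≤ m →
    ((Sm m).filter (fun x => x.val < m + 2 * c)).card = c := by
  intro c
  induction c with
  | zero =>
    intro _
    rw [Finset.card_eq_zero]
    ext x
    simp only [mem_filter, mem_Sm, Finset.notMem_empty, iff_false]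
    rintro ⟨⟨h1, _⟩, h2⟩; omega
  | succ c ih =>
    intro hc
    have hx : (⟨m + 2 * c, by omega⟩ : Fin (3 * m)) ∉ (Sm m).filter (fun x => x.val < m + 2 * c) := by
      simp
    have : (Sm m).filter (fun x => x.val < m + 2 * (c + 1)) =
        insert ⟨m + 2 * c, by omega⟩ ((Sm m).filter (fun x => x.val < m + 2 * c)) := by
      ext x
      simp only [mem_filter, mem_Sm, Finset.mem_insert, Fin.ext_iff]
      constructor
      · rintro ⟨⟨h1, h2⟩, h3⟩
        by_cases h : x.val < m + 2 * c
        · exact Or.inr ⟨⟨h1, h2⟩, h⟩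
        · left; omega
      · rintro (h | ⟨⟨h1, h2⟩, h3⟩)
        · constructor
          · constructor <;> omega
          · omega
        · exact ⟨⟨h1, h2⟩, by omega⟩
    rw [this, Finset.card_insert_of_notMem hx, ih (by omega)]

lemma card_Sm {m : ℕ} : (Sm m).card = m := by
  have h := card_Sm_filter (m := m) m le_rfl
  rw [Finset.filter_true_of_mem (fun x hx => by omega)] at h
  exact h

lemma Gmm_eq_erase {m j : ℕ} (hj : j < m) :
    Gmm m j = (Sm m).erase ⟨m + 2 * j, by omega⟩ := by
  ext x
  simp only [mem_Gmm, Finset.mem_erase, mem_Sm, Ne, Fin.ext_iff, Fin.val_mk]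
  tauto

lemma card_Gmm {m j : ℕ} (hj : j < m) : (Gmm m j).card = m - 1 := by
  rw [Gmm_eq_erase hj, Finset.card_erase_of_mem (by simp only [mem_Sm, Fin.val_mk]; omega), card_Sm]

lemma Gmm_subset_facetF {m : ℕ} (j : Fin m) : Gmm m j.val ⊆ facetF m j := by
  intro x hx
  rw [mem_Gmm] at hx
  rw [mem_facetF]
  right
  refine ⟨hx.1.1, hx.2, ?_⟩
  intro h
  have := hx.1.2
  omega

lemma Gmm_mem_Δm {m : ℕ} {j : ℕ} (hj : j < m) : Gmm m j ∈ Δm m :=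
  ⟨⟨j, hj⟩, Gmm_subset_facetF ⟨j, hj⟩⟩

lemma Gmm_inj {m : ℕ} {j k : ℕ} (hj : j < m) (hk : k < m) (h : Gmm m j = Gmm m k) :
    j = k := by
  by_contra hne
  have : (⟨m + 2 * k, by omega⟩ : Fin (3 * m)) ∈ Gmm m j := by
    rw [mem_Gmm]
    refine ⟨⟨?_, ?_⟩, ?_⟩ <;> simp only [Fin.val_mk] <;> omega
  rw [h, mem_Gmm, Fin.val_mk] at this
  exact this.2 rfl

lemma zf_Gmm {m : ℕ} (K : Type*) [Field K] {k : ℕ} (hk : k < m) :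
    zf m K (Gmm m k) = (-1 : K) ^ k := by
  rw [zf, Finset.sum_eq_single_of_mem k (Finset.mem_range.2 hk)]
  · rw [if_pos rfl]
  · intro j hj hne
    rw [if_neg]
    intro h
    exact hne (Gmm_inj (Finset.mem_range.1 hj) hk h.symm)

lemma zf_ne_zero {m : ℕ} {K : Type*} [Field K] {G : Finset (Fin (3 * m))}
    (h : zf m K G ≠ 0) : ∃ j < m, G = Gmm m j := by
  by_contra hc
  push_neg at hc
  apply h
  rw [zf]
  apply Finset.sum_eq_zero
  intro j hj
  rw [if_neg (hc j (Finset.mem_range.1 hj))]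

lemma phif_Gmm_zero {m : ℕ} (hm : 2 ≤ m) (K : Type*) [Field K] :
    phif m K (Gmm m 0) = 1 := by
  rw [phif, if_pos]
  ext y
  simp only [Finset.mem_image, Finset.mem_Ioo, mem_Gmm]
  constructor
  · rintro ⟨x, ⟨⟨h1, h2⟩, h3⟩, rfl⟩
    have hx3 := x.isLt
    rw [fm, if_neg (by omega)]
    omega
  · rintro ⟨hy0, hym⟩
    refine ⟨⟨m + 2 * y, by omega⟩, ⟨⟨?_, ?_⟩, ?_⟩, ?_⟩
    · simp only [Fin.val_mk]; omega
    · simp only [Fin.val_mk]; omega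
    · simp only [Fin.val_mk]; omega
    · rw [fm]
      simp only [Fin.val_mk]
      rw [if_neg (by omega)]
      omega

lemma phif_Gmm_ne {m : ℕ} (hm : 2 ≤ m) (K : Type*) [Field K] {j : ℕ} (hj : j < m) (hj0 : j ≠ 0) :
    phif m K (Gmm m j) = 0 := by
  rw [phif, if_neg]
  intro h
  have h0 : (0 : ℕ) ∈ (Gmm m j).image (fm m) := by
    refine Finset.mem_image.2 ⟨⟨m, by omega⟩, ?_, ?_⟩
    · rw [mem_Gmm]
      refine ⟨⟨?_, ?_⟩, ?_⟩ <;> simp only [Fin.val_mk] <;> omega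
    · rw [fm]; simp only [Fin.val_mk]
      rw [if_neg (by omega)]
      omega
  rw [h] at h0
  simp at h0

lemma indexOf_sorted {α : Type*} [LinearOrder α] [DecidableEq α] : ∀ {l : List α}, l.Pairwise (· < ·) →
    ∀ {v}, v ∈ l → l.idxOf v = l.countP (fun x => x < v)
  | [], _, v, hv => by simp at hv
  | x :: xs, hl, v, hv => by
    rcases List.mem_cons.1 hv with rfl | hv
    · rw [List.idxOf_cons_self]
      have h2 : ∀ y ∈ v :: xs, ¬ (y < v) := by
        intro y hy
        rcases List.mem_cons.1 hy with rfl | hy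
        · exact lt_irrefl _
        · exact not_lt.2 (le_of_lt ((List.pairwise_cons.1 hl).1 y hy))
      rw [List.countP_eq_zero.2 (by intro y hy; simpa using h2 y hy)]
    · have hxv : x < v := (List.pairwise_cons.1 hl).1 v hv
      rw [List.idxOf_cons_ne _ (ne_of_lt hxv),
        List.countP_cons, indexOf_sorted (List.pairwise_cons.1 hl).2 hv]
      simp [hxv]

lemma indexOf_sort {α : Type*} [LinearOrder α] [DecidableEq α] (H : Finset α) {v : α} (hv : v ∈ H) :
    (H.sort (· ≤ ·)).idxOf v = (H.filter (· < v)).card := by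
  rw [indexOf_sorted ((Finset.sortedLT_sort H).pairwise) (by rwa [Finset.mem_sort])]
  have h1 : (H.filter (· < v)).card = Multiset.countP (· < v) H.val := by
    simp [Finset.filter, Finset.card, Multiset.countP_eq_card_filter]
  rw [h1, ← Finset.sort_eq H (· ≤ ·), Multiset.coe_countP]

lemma subset_Sm_decomp {m : ℕ} [DecidableEq (Fin (3 * m))] {G : Finset (Fin (3 * m))} (hGS : G ⊆ Sm m)
    {s t : Fin (3 * m)} (hst : s ≠ t) (hSd : Sm m \ G = {s, t}) :
    G = (Sm m) \ {s, t} := by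
  ext x
  simp only [Finset.mem_sdiff, Finset.mem_insert, Finset.mem_singleton]
  constructor
  · intro hx
    refine ⟨hGS hx, ?_⟩
    rintro (rfl | rfl)
    · have : x ∈ Sm m \ G := by rw [hSd]; simp
      exact (Finset.mem_sdiff.1 this).2 hx
    · have : x ∈ Sm m \ G := by rw [hSd]; simp
      exact (Finset.mem_sdiff.1 this).2 hx
  · rintro ⟨hx1, hx2⟩
    by_contra hxG
    have : x ∈ Sm m \ G := Finset.mem_sdiff.2 ⟨hx1, hxG⟩
    rw [hSd] at this
    simp only [Finset.mem_insert, Finset.mem_singleton] at this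
    tauto

lemma cycle_lemma {m : ℕ} [DecidableEq (Fin (3 * m))] (hm : 2 ≤ m) (K : Type*) [Field K] (G : Finset (Fin (3 * m)))
    (hcard : G.card = m - 2) :
    ∑ v : Fin (3 * m), (if v ∉ G ∧ insert v G ∈ Δm m then
      (-1 : K) ^ (((insert v G).sort (· ≤ ·)).idxOf v) * zf m K (insert v G) else 0) = 0 := by
  by_cases hGS : G ⊆ Sm m
  swap
  · -- all terms vanish
    apply Finset.sum_eq_zero
    intro v _
    split_ifs with h
    · have hz : zf m K (insert v G) = 0 := by
        rw [zf]
        apply Finset.sum_eq_zero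
        intro j hj
        rw [if_neg]
        intro he
        exact hGS (fun x hx => (Gmm_subset_facetF ⟨j, Finset.mem_range.1 hj⟩ (he ▸ Finset.mem_insert_of_mem hx) |> fun hxF => by
          have := he ▸ (Finset.mem_insert_of_mem hx : x ∈ insert v G)
          rw [mem_Gmm] at this
          rw [mem_Sm]
          exact this.1))
      rw [hz, mul_zero]
    · rfl
  · -- G ⊆ Sm
    have hcS : (Sm m \ G).card = 2 := by
      rw [Finset.card_sdiff_of_subset hGS, card_Sm, hcard]; omega
    obtain ⟨s, t, hst, hSd⟩ := Finset.card_eq_two.1 hcS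
    -- wlog s < t
    wlog hlt : s < t generalizing s t
    · exact this t s hst.symm (by rw [hSd]; exact Finset.pair_comm s t) ((hst.lt_or_gt).resolve_left hlt)
    have hsS : s ∈ Sm m ∧ s ∉ G := by
      have : s ∈ Sm m \ G := by rw [hSd]; simp
      exact Finset.mem_sdiff.1 this
    have htS : t ∈ Sm m ∧ t ∉ G := by
      have : t ∈ Sm m \ G := by rw [hSd]; simp
      exact Finset.mem_sdiff.1 this
    have hs1 : m ≤ s.val ∧ (s.val - m) % 2 = 0 := mem_Sm.1 hsS.1
    have ht1 : m ≤ t.val ∧ (t.val - m) % 2 = 0 := mem_Sm.1 htS.1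
    have hs3 := s.isLt
    have ht3 := t.isLt
    set js := (s.val - m) / 2 with hjs
    set kt := (t.val - m) / 2 with hkt
    have hsv : s.val = m + 2 * js := by omega
    have htv : t.val = m + 2 * kt := by omega
    have hjsm : js < m := by omega
    have hktm : kt < m := by omega
    have hjk : js < kt := by
      have := (Fin.lt_def.1 hlt); omega
    have hGeq : G = (Sm m) \ {s, t} := subset_Sm_decomp hGS hst hSd
    -- insert s G = Gmm m kt
    have hins : insert s G = Gmm m kt := by
      ext x
      simp only [Finset.mem_insert, hGeq, Finset.mem_sdiff, Finset.mem_insert,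
        Finset.mem_singleton, mem_Gmm, mem_Sm]
      constructor
      · rintro (rfl | ⟨hx1, hx2⟩)
        · exact ⟨⟨hs1.1, hs1.2⟩, by omega⟩
        · refine ⟨hx1, ?_⟩
          intro hxv
          exact hx2 (Or.inr (Fin.ext (by omega)))
      · rintro ⟨hx1, hx2⟩
        by_cases hxs : x = s
        · exact Or.inl hxs
        · refine Or.inr ⟨hx1, ?_⟩
          rintro (rfl | rfl)
          · exact hxs rfl
          · exact hx2 (by omega)
    have hint : insert t G = Gmm m js := by
      ext x
      simp only [Finset.mem_insert, hGeq, Finset.mem_sdiff, Finset.mem_insert,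
        Finset.mem_singleton, mem_Gmm, mem_Sm]
      constructor
      · rintro (rfl | ⟨hx1, hx2⟩)
        · exact ⟨⟨ht1.1, ht1.2⟩, by omega⟩
        · refine ⟨hx1, ?_⟩
          intro hxv
          exact hx2 (Or.inl (Fin.ext (by omega)))
      · rintro ⟨hx1, hx2⟩
        by_cases hxt : x = t
        · exact Or.inl hxt
        · refine Or.inr ⟨hx1, ?_⟩
          rintro (rfl | rfl)
          · exact hx2 (by omega)
          · exact hxt rfl
    -- all other terms vanish
    have hzero : ∀ v : Fin (3 * m), v ∉ ({s, t} : Finset (Fin (3 * m))) →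
        (if v ∉ G ∧ insert v G ∈ Δm m then
          (-1 : K) ^ (((insert v G).sort (· ≤ ·)).idxOf v) * zf m K (insert v G) else 0) = 0 := by
      intro v hv
      simp only [Finset.mem_insert, Finset.mem_singleton] at hv
      push_neg at hv
      split_ifs with h
      · have hz : zf m K (insert v G) = 0 := by
          rw [zf]
          apply Finset.sum_eq_zero
          intro j hj
          rw [if_neg]
          intro he
          -- v ∈ insert v G = Gmm j ⊆ Sm, v ∉ G so v ∈ Sm \ G = {s,t}, contra
          have hvS : v ∈ Sm m := by
            have : v ∈ Gmm m j := he ▸ Finset.mem_insert_self v G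
            exact mem_Sm.2 (mem_Gmm.1 this).1
          have : v ∈ Sm m \ G := Finset.mem_sdiff.2 ⟨hvS, h.1⟩
          rw [hSd] at this
          simp only [Finset.mem_insert, Finset.mem_singleton] at this
          tauto
        rw [hz, mul_zero]
      · rfl
    rw [← Finset.sum_subset (Finset.subset_univ {s, t})
        (fun v _ hv => hzero v hv), Finset.sum_pair hst]
    -- now compute the two terms
    have hsmem : s ∈ insert s G := Finset.mem_insert_self s G
    have htmem : t ∈ insert t G := Finset.mem_insert_self t G
    have hcond_s : s ∉ G ∧ insert s G ∈ Δm m := ⟨hsS.2, hins ▸ Gmm_mem_Δm hktm⟩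
    have hcond_t : t ∉ G ∧ insert t G ∈ Δm m := ⟨htS.2, hint ▸ Gmm_mem_Δm hjsm⟩
    rw [if_pos hcond_s, if_pos hcond_t, indexOf_sort _ hsmem, indexOf_sort _ htmem,
      hins, hint, zf_Gmm K hktm, zf_Gmm K hjsm]
    -- index of s
    have hidxs : ((Gmm m kt).filter (· < s)).card = js := by
      have : (Gmm m kt).filter (· < s) = (Sm m).filter (fun x => x.val < m + 2 * js) := by
        ext x
        simp only [Finset.mem_filter, mem_Gmm, mem_Sm, Fin.lt_def]
        constructor
        · rintro ⟨⟨hx1, _⟩, hx2⟩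
          exact ⟨hx1, by omega⟩
        · rintro ⟨hx1, hx2⟩
          refine ⟨⟨⟨hx1.1, hx1.2⟩, by omega⟩, by omega⟩
      rw [this, card_Sm_filter js (le_of_lt hjsm)]
    have hidxt : ((Gmm m js).filter (· < t)).card = kt - 1 := by
      have heq : (Gmm m js).filter (· < t) =
          ((Sm m).filter (fun x => x.val < m + 2 * kt)).erase s := by
        ext x
        simp only [Finset.mem_filter, mem_Gmm, mem_Sm, Fin.lt_def, Finset.mem_erase]
        constructor
        · rintro ⟨⟨⟨hx1, hx2⟩, hx3⟩, hx4⟩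
          refine ⟨?_, ⟨hx1, hx2⟩, by omega⟩
          intro hxs
          exact hx3 (by rw [hxs]; omega)
        · rintro ⟨hx1, hx2, hx3⟩
          refine ⟨⟨⟨hx2.1, hx2.2⟩, ?_⟩, by omega⟩
          intro hxv
          exact hx1 (Fin.ext (by omega))
      rw [heq, Finset.card_erase_of_mem, card_Sm_filter kt (le_of_lt hktm)]
      simp only [Finset.mem_filter, mem_Sm]
      refine ⟨⟨hs1.1, hs1.2⟩, by omega⟩
    rw [hidxs, hidxt]
    have hk1 : (-1 : K) ^ kt = (-1 : K) ^ (kt - 1) * (-1) := by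
      rw [← pow_succ]
      congr 1
      omega
    rw [hk1]
    ring

lemma phif_congr {m : ℕ} (K : Type*) [Field K] {A B : Finset (Fin (3 * m))}
    (h : A.image (fm m) = B.image (fm m)) : phif m K A = phif m K B := by
  rw [phif, phif, h]

lemma cocycle {m : ℕ} [DecidableEq (Fin (3 * m))] (hm : 2 ≤ m) (K : Type*) [Field K] (H : Finset (Fin (3 * m)))
    (hH : H ∈ Δm m) (hcard : H.card = m) :
    ∑ v ∈ H, (-1 : K) ^ ((H.sort (· ≤ ·)).idxOf v) * phif m K (H.erase v) = 0 := by
  obtain ⟨i, hFi⟩ := hH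
  -- fm maps H into (range m).erase i.val
  have hmaps : ∀ x ∈ H, fm m x ∈ (Finset.range m).erase i.val := by
    intro x hx
    have hxF := mem_facetF.1 (hFi hx)
    have hi := i.isLt
    rw [Finset.mem_erase, Finset.mem_range]
    rcases hxF with h1 | ⟨h1, h2, h3⟩
    · rw [fm, if_pos (by omega)]
      rcases Nat.lt_or_ge (x.val + 1) m with hlt | hge
      · rw [Nat.mod_eq_of_lt hlt]; omega
      · have : x.val + 1 = m := by omega
        rw [this, Nat.mod_self]; omega
    · rw [fm, if_neg (by omega)]
      have := x.isLt
      omega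
  have hpig : ∃ a ∈ H, ∃ b ∈ H, a ≠ b ∧ fm m a = fm m b := by
    apply Finset.exists_ne_map_eq_of_card_lt_of_maps_to _ hmaps
    rw [Finset.card_erase_of_mem (Finset.mem_range.2 i.isLt), Finset.card_range, hcard]
    omega
  obtain ⟨a, haH, b, hbH, hab, hfab⟩ := hpig
  wlog hlt : a < b generalizing a b
  · exact this b hbH a haH hab.symm hfab.symm (hab.lt_or_gt.resolve_left hlt)
  -- all terms besides a, b vanish
  have hzero : ∀ v ∈ H, v ∉ ({a, b} : Finset (Fin (3 * m))) →
      (-1 : K) ^ ((H.sort (· ≤ ·)).idxOf v) * phif m K (H.erase v) = 0 := by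
    intro v hv hvab
    simp only [Finset.mem_insert, Finset.mem_singleton] at hvab
    push_neg at hvab
    have himgeq : (H.erase v).image (fm m) = ((H.erase v).erase a).image (fm m) := by
      apply subset_antisymm
      · intro y hy
        obtain ⟨x, hx, rfl⟩ := Finset.mem_image.1 hy
        by_cases hxa : x = a
        · subst hxa
          exact Finset.mem_image.2 ⟨b, Finset.mem_erase.2 ⟨hab.symm,
            Finset.mem_erase.2 ⟨fun h => hvab.2 h.symm, hbH⟩⟩, hfab.symm⟩
        · exact Finset.mem_image.2 ⟨x, Finset.mem_erase.2 ⟨hxa, hx⟩, rfl⟩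
      · exact Finset.image_subset_image (Finset.erase_subset _ _)
    have hc1 : ((H.erase v).image (fm m)).card ≤ m - 2 := by
      rw [himgeq]
      calc (((H.erase v).erase a).image (fm m)).card ≤ ((H.erase v).erase a).card :=
            Finset.card_image_le
        _ ≤ (H.erase v).card - 1 := by
            rw [Finset.card_erase_of_mem (Finset.mem_erase.2 ⟨fun h => hvab.1 h.symm, haH⟩)]
        _ = m - 2 := by rw [Finset.card_erase_of_mem hv, hcard]; omega
    have : phif m K (H.erase v) = 0 := by
      rw [phif, if_neg]
      intro h
      rw [h, Nat.card_Ioo] at hc1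
      omega
    rw [this, mul_zero]
  rw [← Finset.sum_subset (show ({a, b} : Finset (Fin (3 * m))) ⊆ H by
      intro x hx
      rcases Finset.mem_insert.1 hx with rfl | hx
      · exact haH
      · rw [Finset.mem_singleton] at hx; subst hx; exact hbH) hzero,
    Finset.sum_pair hab]
  have himg : (H.erase a).image (fm m) = (H.erase b).image (fm m) := by
    apply subset_antisymm <;> intro y hy <;> obtain ⟨x, hx, rfl⟩ := Finset.mem_image.1 hy
    · rw [Finset.mem_erase] at hx
      by_cases hxb : x = b
      · subst hxb
        exact Finset.mem_image.2 ⟨a, Finset.mem_erase.2 ⟨hab, haH⟩, hfab⟩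
      · exact Finset.mem_image.2 ⟨x, Finset.mem_erase.2 ⟨hxb, hx.2⟩, rfl⟩
    · rw [Finset.mem_erase] at hx
      by_cases hxa : x = a
      · subst hxa
        exact Finset.mem_image.2 ⟨b, Finset.mem_erase.2 ⟨hab.symm, hbH⟩, hfab.symm⟩
      · exact Finset.mem_image.2 ⟨x, Finset.mem_erase.2 ⟨hxa, hx.2⟩, rfl⟩
  rw [phif_congr K himg]
  by_cases hIoo : (H.erase b).image (fm m) = Finset.Ioo 0 m
  swap
  · rw [phif, if_neg hIoo, mul_zero, mul_zero, add_zero]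
  -- the interesting case
  have hinj : Set.InjOn (fm m) (H.erase b : Set (Fin (3 * m))) := by
    apply Finset.injOn_of_card_image_eq
    rw [hIoo, Nat.card_Ioo, Finset.card_erase_of_mem hbH, hcard]; omega
  -- InjOn on H.erase a as well
  have hinja : Set.InjOn (fm m) ((H.erase a) : Set (Fin (3 * m))) := by
    apply Finset.injOn_of_card_image_eq
    rw [himg, hIoo, Nat.card_Ioo, Finset.card_erase_of_mem haH, hcard]; omega
  -- key step: every element of H below b is either a or below a
  have hup : ∀ x ∈ H, x < b → x = a ∨ x < a := by
    rcases Nat.lt_or_ge a.val m with ham | ham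
    · -- a is the cone vertex u_i
      have hai : a.val = i.val := by
        rcases mem_facetF.1 (hFi haH) with h1 | ⟨h1, _, _⟩
        · exact h1
        · omega
      have hbm : m ≤ b.val := by
        rcases mem_facetF.1 (hFi hbH) with h1 | ⟨h1, _, _⟩
        · exfalso; apply hab; apply Fin.ext; omega
        · exact h1
      have hi0 : i.val = 0 := by
        by_contra hi0
        have hIm : i.val ∈ Finset.Ioo 0 m := Finset.mem_Ioo.2 ⟨Nat.pos_of_ne_zero hi0, i.isLt⟩
        rw [← hIoo] at hIm
        obtain ⟨x, hx, hfx⟩ := Finset.mem_image.1 hIm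
        rw [Finset.mem_erase] at hx
        rcases mem_facetF.1 (hFi hx.2) with h1 | ⟨h1, h2, h3⟩
        · have hxa : x = a := Fin.ext (by omega)
          subst hxa
          rw [fm, if_pos (by omega)] at hfx
          rcases Nat.lt_or_ge (x.val + 1) m with hlt2 | hge2
          · rw [Nat.mod_eq_of_lt hlt2] at hfx; omega
          · have hh : x.val + 1 = m := by have := i.isLt; omega
            rw [hh, Nat.mod_self] at hfx
            omega
        · rw [fm, if_neg (by omega)] at hfx
          omega
      have ha0 : a.val = 0 := by omega
      have hfa : fm m a = 1 := by
        rw [fm, if_pos (by omega), ha0, Nat.mod_eq_of_lt (by omega)]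
      have hfb : b.val = m + 2 ∨ b.val = m + 3 := by
        have h1 : fm m b = 1 := by rw [← hfab, hfa]
        rw [fm, if_neg (by omega)] at h1
        have := b.isLt
        omega
      intro x hx hxb
      left
      by_contra hxa
      rcases mem_facetF.1 (hFi hx) with h1 | ⟨h1, h2, h3⟩
      · exact hxa (Fin.ext (by omega))
      · rw [hi0] at h2 h3
        have hlt' := Fin.lt_def.1 hxb
        have hx2 : x.val = m + 2 := by omega
        have hb3 : b.val = m + 3 := by omega
        have hfx : fm m x = 1 := by
          rw [fm, if_neg (by omega), hx2]
          omega
        have hxbne : x ≠ b := ne_of_lt hxb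
        apply hxbne
        apply hinja
        · exact Finset.mem_coe.2 (Finset.mem_erase.2 ⟨hxa, hx⟩)
        · exact Finset.mem_coe.2 (Finset.mem_erase.2 ⟨hab.symm, hbH⟩)
        · rw [hfx, ← hfab, hfa]
    · -- both a, b ≥ m: b = a + 1
      have hbm : m ≤ b.val := le_trans ham (le_of_lt (Fin.lt_def.1 hlt))
      have hfa : fm m a = (a.val - m) / 2 := by rw [fm, if_neg (by omega)]
      have hfb : fm m b = (b.val - m) / 2 := by rw [fm, if_neg (by omega)]
      have hbv : b.val = a.val + 1 := by
        rw [hfa, hfb] at hfab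
        have := Fin.lt_def.1 hlt
        omega
      intro x hx hxb
      have := Fin.lt_def.1 hxb
      rcases Nat.lt_or_ge x.val a.val with h | h
      · exact Or.inr (Fin.lt_def.2 h)
      · exact Or.inl (Fin.ext (by omega))
  have hkey : H.filter (· < b) = insert a (H.filter (· < a)) := by
    ext x
    simp only [Finset.mem_filter, Finset.mem_insert]
    constructor
    · rintro ⟨hx1, hx2⟩
      rcases hup x hx1 hx2 with h | h
      · exact Or.inl h
      · exact Or.inr ⟨hx1, h⟩
    · rintro (rfl | ⟨hx1, hx2⟩)
      · exact ⟨haH, hlt⟩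
      · exact ⟨hx1, lt_trans hx2 hlt⟩
  rw [indexOf_sort H haH, indexOf_sort H hbH, hkey,
    Finset.card_insert_of_notMem (by simp only [Finset.mem_filter]; exact fun h => lt_irrefl a h.2),
    pow_succ]
  ring

lemma key_swap {m : ℕ} (K : Type*) [Field K] (k : ℕ)
    (sgn : Finset (Fin (3 * m)) → Fin (3 * m) → K) (φ ω : Finset (Fin (3 * m)) → K)
    (hco : ∀ H, H ∈ Δm m → H.card = k + 2 → ∑ v ∈ H, sgn H v * φ (H.erase v) = 0) :
    ∑ G ∈ univ.filter (fun F : Finset (Fin (3 * m)) => F ∈ Δm m ∧ F.card = k + 1),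
      (φ G * ∑ v : Fin (3 * m), (if v ∉ G ∧ insert v G ∈ Δm m then
        sgn (insert v G) v * ω (insert v G) else 0)) = 0 := by
  set A := univ.filter (fun F : Finset (Fin (3 * m)) => F ∈ Δm m ∧ F.card = k + 1) with hA
  set B := univ.filter (fun F : Finset (Fin (3 * m)) => F ∈ Δm m ∧ F.card = k + 2) with hB
  calc ∑ G ∈ A, (φ G * ∑ v : Fin (3 * m), (if v ∉ G ∧ insert v G ∈ Δm m then
        sgn (insert v G) v * ω (insert v G) else 0))
      = ∑ G ∈ A, ∑ v : Fin (3 * m), (if v ∉ G ∧ insert v G ∈ Δm m then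
          φ G * (sgn (insert v G) v * ω (insert v G)) else 0) := by
        refine Finset.sum_congr rfl fun G _ => ?_
        rw [Finset.mul_sum]
        exact Finset.sum_congr rfl fun v _ => by rw [mul_ite, mul_zero]
    _ = ∑ v : Fin (3 * m), ∑ G ∈ A, (if v ∉ G ∧ insert v G ∈ Δm m then
          φ G * (sgn (insert v G) v * ω (insert v G)) else 0) := Finset.sum_comm
    _ = ∑ v : Fin (3 * m), ∑ H ∈ B, (if v ∈ H then sgn H v * ω H * φ (H.erase v) else 0) := by
        refine Finset.sum_congr rfl fun v _ => ?_
        rw [← Finset.sum_filter, ← Finset.sum_filter]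
        refine Finset.sum_nbij' (fun G => insert v G) (fun H => H.erase v) ?_ ?_ ?_ ?_ ?_
        · intro G hG
          rw [Finset.mem_filter] at hG ⊢
          have hGA := hG.1
          have hvG := hG.2.1
          have hins := hG.2.2
          rw [hA, Finset.mem_filter] at hGA
          rw [hB, Finset.mem_filter]
          exact ⟨⟨Finset.mem_univ _, hins, by
            rw [Finset.card_insert_of_notMem hvG, hGA.2.2]⟩, Finset.mem_insert_self v G⟩
        · intro H hH
          rw [Finset.mem_filter] at hH ⊢
          obtain ⟨hHB, hvH⟩ := hH
          rw [hB, Finset.mem_filter] at hHB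
          have hins : insert v (H.erase v) = H := Finset.insert_erase hvH
          refine ⟨?_, Finset.notMem_erase v H, by rw [hins]; exact hHB.2.1⟩
          rw [hA, Finset.mem_filter]
          refine ⟨Finset.mem_univ _, Δm_down (Finset.erase_subset v H) hHB.2.1, ?_⟩
          rw [Finset.card_erase_of_mem hvH, hHB.2.2]
          omega
        · intro G hG
          rw [Finset.mem_filter] at hG
          exact Finset.erase_insert hG.2.1
        · intro H hH
          rw [Finset.mem_filter] at hH
          exact Finset.insert_erase hH.2
        · intro G hG
          rw [Finset.mem_filter] at hG
          rw [Finset.erase_insert hG.2.1]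
          ring
    _ = ∑ H ∈ B, ∑ v : Fin (3 * m), (if v ∈ H then sgn H v * ω H * φ (H.erase v) else 0) :=
        Finset.sum_comm
    _ = 0 := by
        refine Finset.sum_eq_zero fun H hH => ?_
        rw [Finset.sum_ite_mem, Finset.univ_inter]
        rw [hB, Finset.mem_filter] at hH
        calc ∑ v ∈ H, sgn H v * ω H * φ (H.erase v)
            = ω H * ∑ v ∈ H, sgn H v * φ (H.erase v) := by
              rw [Finset.mul_sum]
              exact Finset.sum_congr rfl fun v _ => by ring
          _ = 0 := by rw [hco H hH.2.1 hH.2.2, mul_zero]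

/-- For `m ≥ 2`, the reduced `(m-2)`-nd simplicial homology with coefficients in a
field `K` of the complex with facets `F₁, …, F_m` is nonzero: there is an
`(m-2)`-dimensional cycle which is not a boundary. -/
theorem stmt13 {m : ℕ} (hm : 2 ≤ m) (K : Type*) [Field K] :
    ∃ z : {F : Finset (Fin (3 * m)) // F ∈ Δm m ∧ F.card = (m - 2) + 1} → K,
      bdry (Δm m) (m - 2) z = 0 ∧ ∀ w, bdry (Δm m) (m - 2 + 1) w ≠ z := by
  have hinst : (fun a b => @LinearOrder.toDecidableEq (Fin (3 * m)) _ a b : DecidableEq (Fin (3 * m)))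
      = instDecidableEqFin (3 * m) := Subsingleton.elim _ _
  refine ⟨fun G => zf m K G.1, ?_, ?_⟩
  · funext G
    rw [Pi.zero_apply, bdry]
    simp only [hinst]
    refine Eq.trans (Finset.sum_congr rfl fun v _ => ?_) (cycle_lemma hm K G.1 G.2.2)
    split_ifs with h
    · rfl
    · rfl
  · intro w hw
    have h0m : (0 : ℕ) < m := by omega
    -- the evaluation of the cocycle on the cycle is 1
    have hzb : ∑ G : {F : Finset (Fin (3 * m)) // F ∈ Δm m ∧ F.card = (m - 2) + 1},
        phif m K G.1 * zf m K G.1 = 1 := by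
      have hG0 : Gmm m 0 ∈ Δm m ∧ (Gmm m 0).card = (m - 2) + 1 :=
        ⟨Gmm_mem_Δm h0m, by rw [card_Gmm h0m]; omega⟩
      rw [Finset.sum_eq_single_of_mem (⟨Gmm m 0, hG0⟩ :
          {F : Finset (Fin (3 * m)) // F ∈ Δm m ∧ F.card = (m - 2) + 1})
          (Finset.mem_univ _)]
      · simp only [phif_Gmm_zero hm K, zf_Gmm K h0m, pow_zero, one_mul]
      · intro G _ hne
        by_cases hzf : zf m K G.1 = 0
        · rw [hzf, mul_zero]
        · obtain ⟨j, hj, hGj⟩ := zf_ne_zero hzf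
          rcases Nat.eq_zero_or_pos j with rfl | hj0
          · exact absurd (Subtype.ext hGj) hne
          · have : phif m K G.1 = 0 := by rw [hGj]; exact phif_Gmm_ne hm K hj (by omega)
            rw [this, zero_mul]
    -- the evaluation of the cocycle on any boundary is 0
    have hbb : ∑ G : {F : Finset (Fin (3 * m)) // F ∈ Δm m ∧ F.card = (m - 2) + 1},
        phif m K G.1 * bdry (Δm m) (m - 2 + 1) w G = 0 := by
      set sgn : Finset (Fin (3 * m)) → Fin (3 * m) → K :=
        fun H v => (-1 : K) ^ ((H.sort (· ≤ ·)).idxOf v) with hsgn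
      set ω : Finset (Fin (3 * m)) → K := fun F =>
        if h : F ∈ Δm m ∧ F.card = (m - 2 + 1) + 1 then w ⟨F, h⟩ else 0 with hω
      set g : Finset (Fin (3 * m)) → K := fun F =>
        if h : F ∈ Δm m ∧ F.card = (m - 2) + 1
        then phif m K F * bdry (Δm m) (m - 2 + 1) w ⟨F, h⟩ else 0 with hg
      have step1 : ∑ G : {F : Finset (Fin (3 * m)) // F ∈ Δm m ∧ F.card = (m - 2) + 1},
          phif m K G.1 * bdry (Δm m) (m - 2 + 1) w G =
          ∑ F ∈ univ.filter (fun F : Finset (Fin (3 * m)) => F ∈ Δm m ∧ F.card = (m - 2) + 1),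
            g F := by
        rw [Finset.sum_subtype
          (p := fun F : Finset (Fin (3 * m)) => F ∈ Δm m ∧ F.card = (m - 2) + 1)
          _ (fun x => by simp) g]
        refine Finset.sum_congr rfl fun G _ => ?_
        rw [hg]
        beta_reduce
        exact (dif_pos G.2
          (t := fun h => phif m K ↑G * bdry (Δm m) (m - 2 + 1) w ⟨↑G, h⟩)
          (e := fun _ => (0 : K))).symm
      rw [step1]
      have step2 : ∀ F ∈ univ.filter
          (fun F : Finset (Fin (3 * m)) => F ∈ Δm m ∧ F.card = (m - 2) + 1),
          g F = phif m K F * ∑ v : Fin (3 * m),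
            (if v ∉ F ∧ insert v F ∈ Δm m then sgn (insert v F) v * ω (insert v F) else 0) := by
        intro F hF
        rw [Finset.mem_filter] at hF
        rw [hg]
        beta_reduce
        refine Eq.trans (dif_pos hF.2
          (t := fun h => phif m K F * bdry (Δm m) (m - 2 + 1) w ⟨F, h⟩)
          (e := fun _ => (0 : K))) ?_
        congr 1
        rw [bdry]
        simp only [hinst]
        refine Finset.sum_congr rfl fun v _ => ?_
        split_ifs with h
        · simp only [hsgn, hω]
          rw [dif_pos ⟨h.2, by rw [Finset.card_insert_of_notMem h.1, hF.2.2]⟩]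
        · rfl
      rw [Finset.sum_congr rfl step2]
      refine key_swap K (m - 2) sgn (phif m K) ω ?_
      intro H h1 h2
      simp only [hsgn]
      exact cocycle hm K H h1 (by omega)
    have hfinal := congrArg
      (fun c : {F : Finset (Fin (3 * m)) // F ∈ Δm m ∧ F.card = (m - 2) + 1} → K =>
        ∑ G : {F : Finset (Fin (3 * m)) // F ∈ Δm m ∧ F.card = (m - 2) + 1},
          phif m K G.1 * c G) hw
    rw [hbb, hzb] at hfinal
    exact zero_ne_one hfinal
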